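/- Logical equivalence is closed under backward weak head reduction: if Γ ⊢ N1 ≈ N2 : A, M1 multi-step weak head reduces to N1, and M2 multi-step weak head reduces to N2, then Γ ⊢ M1 ≈ M2 : A. The proof is by induction on the type A. -/

import Mathlib

/-- Simple types: base type `i` and function types. -/
inductive Ty : Type
  | base : Ty
  | arr  : Ty → Ty → Ty

/-- Untyped lambda terms with de Bruijn indices. -/
inductive Tm : Type
  | var : ℕ → Tm
  | lam : Tm → Tm
  | app : Tm → Tm → Tm

namespace Tm

def upRen (ρ : ℕ → ℕ) : ℕ → ℕ
  | 0 => 0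
  | n + 1 => ρ n + 1

/-- Renaming. -/
def rename (ρ : ℕ → ℕ) : Tm → Tm
  | var n => var (ρ n)
  | lam M => lam (rename (upRen ρ) M)
  | app M N => app (rename ρ M) (rename ρ N)

/-- Lifting a simultaneous substitution under a binder. -/
def lift (σ : ℕ → Tm) : ℕ → Tm
  | 0 => var 0
  | n + 1 => rename Nat.succ (σ n)

/-- Simultaneous (capture-avoiding) substitution. -/
def subst (σ : ℕ → Tm) : Tm → Tm
  | var n => σ n
  | lam M => lam (subst (lift σ) M)
  | app M N => app (subst σ M) (subst σ N)

/-- Extending a substitution with a term for the top variable. -/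
def scons (N : Tm) (σ : ℕ → Tm) : ℕ → Tm
  | 0 => N
  | n + 1 => σ n

/-- Substitution of a single term for the top variable. -/
def subst1 (N M : Tm) : Tm := subst (scons N var) M

end Tm

/-- Single-step weak head reduction. -/
inductive Step : Tm → Tm → Prop
  | beta {M N : Tm} : Step (Tm.app (Tm.lam M) N) (Tm.subst1 N M)
  | app {M M' N : Tm} : Step M M' → Step (Tm.app M N) (Tm.app M' N)

/-- Multi-step weak head reduction (reflexive-transitive closure). -/
inductive MStep : Tm → Tm → Prop
  | refl {M : Tm} : MStep M M
  | trans1 {M M' M'' : Tm} : Step M M' → MStep M' M'' → MStep M M''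

/-- Paths (neutral terms): a variable applied to arguments. -/
inductive IsPath : Tm → Prop
  | var {n : ℕ} : IsPath (Tm.var n)
  | app {M N : Tm} : IsPath M → IsPath (Tm.app M N)

/-- Typing contexts (de Bruijn): the `n`-th entry types variable `n`. -/
abbrev Ctx := List Ty

mutual
  /-- Algorithmic term equivalence `Γ ⊢ M ⇔ N : A`. -/
  inductive AlgTm : Ctx → Tm → Tm → Ty → Prop
    | base {Γ : Ctx} {M N P Q : Tm} :
        MStep M P → MStep N Q → AlgPath Γ P Q Ty.base → AlgTm Γ M N Ty.base
    | arr {Γ : Ctx} {M N : Tm} {A B : Ty} :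
        AlgTm (A :: Γ) (Tm.app (Tm.rename Nat.succ M) (Tm.var 0))
                       (Tm.app (Tm.rename Nat.succ N) (Tm.var 0)) B →
        AlgTm Γ M N (Ty.arr A B)

  /-- Algorithmic path equivalence `Γ ⊢ M ↔ N : A`. -/
  inductive AlgPath : Ctx → Tm → Tm → Ty → Prop
    | var {Γ : Ctx} {n : ℕ} {A : Ty} :
        Γ[n]? = some A → AlgPath Γ (Tm.var n) (Tm.var n) A
    | app {Γ : Ctx} {M1 M2 N1 N2 : Tm} {A B : Ty} :
        AlgPath Γ M1 M2 (Ty.arr A B) → AlgTm Γ N1 N2 A →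
        AlgPath Γ (Tm.app M1 N1) (Tm.app M2 N2) B
end

/-- `PathSub Δ π Γ`: π maps each variable `x:T` of Γ to a path `P` with `Δ ⊢ P ↔ P : T`. -/
def PathSub (Δ : Ctx) (π : ℕ → Tm) (Γ : Ctx) : Prop :=
  ∀ n A, Γ[n]? = some A → AlgPath Δ (π n) (π n) A

/-- Logical equivalence `Γ ⊢ M ≈ N : A`, defined by recursion on the type. -/
def Log : Ty → Ctx → Tm → Tm → Prop
  | Ty.base => fun Γ M N => AlgTm Γ M N Ty.base
  | Ty.arr A B => fun Γ M N =>
      ∀ (Δ : Ctx) (π : ℕ → Tm), PathSub Δ π Γ →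
        ∀ N1 N2, Log A Δ N1 N2 →
          Log B Δ (Tm.app (Tm.subst π M) N1) (Tm.app (Tm.subst π N) N2)

/-- `LogSub Δ σ1 σ2 Γ`: the substitutions σ1, σ2 are pointwise logically related at Γ. -/
def LogSub (Δ : Ctx) (σ1 σ2 : ℕ → Tm) (Γ : Ctx) : Prop :=
  ∀ n A, Γ[n]? = some A → Log A Δ (σ1 n) (σ2 n)

/-- Declarative equivalence `Γ ⊢ M ≡ N : A`. -/
inductive Decl : Ctx → Tm → Tm → Ty → Prop
  | beta {Γ : Ctx} {M1 M2 N1 N2 : Tm} {A B : Ty} :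
      Decl (A :: Γ) M2 N2 B → Decl Γ M1 N1 A →
      Decl Γ (Tm.app (Tm.lam M2) M1) (Tm.subst1 N1 N2) B
  | lam {Γ : Ctx} {M N : Tm} {A B : Ty} :
      Decl (A :: Γ) M N B → Decl Γ (Tm.lam M) (Tm.lam N) (Ty.arr A B)
  | ext {Γ : Ctx} {M N : Tm} {A B : Ty} :
      Decl (A :: Γ) (Tm.app (Tm.rename Nat.succ M) (Tm.var 0))
                    (Tm.app (Tm.rename Nat.succ N) (Tm.var 0)) B →
      Decl Γ M N (Ty.arr A B)
  | var {Γ : Ctx} {n : ℕ} {A : Ty} :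
      Γ[n]? = some A → Decl Γ (Tm.var n) (Tm.var n) A
  | app {Γ : Ctx} {M1 M2 N1 N2 : Tm} {A B : Ty} :
      Decl Γ M1 M2 (Ty.arr A B) → Decl Γ N1 N2 A →
      Decl Γ (Tm.app M1 N1) (Tm.app M2 N2) B
  | symm {Γ : Ctx} {M N : Tm} {A : Ty} : Decl Γ M N A → Decl Γ N M A
  | trans {Γ : Ctx} {M N O : Tm} {A : Ty} :
      Decl Γ M N A → Decl Γ N O A → Decl Γ M O A

namespace Tm

theorem rename_ext {ρ1 ρ2 : ℕ → ℕ} (h : ∀ n, ρ1 n = ρ2 n) (M : Tm) :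
    rename ρ1 M = rename ρ2 M := by
  induction M generalizing ρ1 ρ2 with
  | var n => simp [rename, h]
  | lam M ih =>
    simp [rename]; exact @ih _ _ (fun n => by cases n <;> simp [upRen, h])
  | app M N ihM ihN => simp [rename, ihM h, ihN h]

theorem subst_ext {σ1 σ2 : ℕ → Tm} (h : ∀ n, σ1 n = σ2 n) (M : Tm) :
    subst σ1 M = subst σ2 M := by
  induction M generalizing σ1 σ2 with
  | var n => simp [subst, h]
  | lam M ih =>
    simp [subst]; exact @ih _ _ (fun n => by cases n <;> simp [lift, h])
  | app M N ihM ihN => simp [subst, ihM h, ihN h]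

theorem rename_rename (ρ1 ρ2 : ℕ → ℕ) (M : Tm) :
    rename ρ2 (rename ρ1 M) = rename (fun n => ρ2 (ρ1 n)) M := by
  induction M generalizing ρ1 ρ2 with
  | var n => simp [rename]
  | lam M ih =>
    simp [rename, ih]
    exact rename_ext (fun n => by cases n <;> simp [upRen]) M
  | app M N ihM ihN => simp [rename, ihM, ihN]

theorem subst_rename (σ : ℕ → Tm) (ρ : ℕ → ℕ) (M : Tm) :
    subst σ (rename ρ M) = subst (fun n => σ (ρ n)) M := by
  induction M generalizing σ ρ with
  | var n => simp [rename, subst]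
  | lam M ih =>
    simp [rename, subst, ih]
    exact subst_ext (fun n => by cases n <;> simp [lift, upRen]) M
  | app M N ihM ihN => simp [rename, subst, ihM, ihN]

theorem rename_subst (ρ : ℕ → ℕ) (σ : ℕ → Tm) (M : Tm) :
    rename ρ (subst σ M) = subst (fun n => rename ρ (σ n)) M := by
  induction M generalizing σ ρ with
  | var n => simp [rename, subst]
  | lam M ih =>
    simp [rename, subst, ih]
    refine subst_ext (fun n => ?_) M
    cases n with
    | zero => simp [lift, rename, upRen]
    | succ n => simp [lift, rename_rename]; exact rename_ext (fun n => rfl) _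
  | app M N ihM ihN => simp [rename, subst, ihM, ihN]

theorem subst_subst (σ τ : ℕ → Tm) (M : Tm) :
    subst τ (subst σ M) = subst (fun n => subst τ (σ n)) M := by
  induction M generalizing σ τ with
  | var n => simp [subst]
  | lam M ih =>
    simp [subst, ih]
    refine subst_ext (fun n => ?_) M
    cases n with
    | zero => simp [lift, subst]
    | succ n =>
      simp [lift, subst_rename, rename_subst]
  | app M N ihM ihN => simp [subst, ihM, ihN]

theorem subst_id (M : Tm) : subst var M = M := by
  induction M with
  | var n => simp [subst]
  | lam M ih =>
    simp [subst]
    rw [subst_ext (σ2 := var) (fun n => by cases n <;> simp [lift, rename]) M, ih]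
  | app M N ihM ihN => simp [subst, ihM, ihN]

theorem subst_subst1 (σ : ℕ → Tm) (N M : Tm) :
    subst σ (subst1 N M) = subst1 (subst σ N) (subst (lift σ) M) := by
  unfold subst1
  rw [subst_subst, subst_subst]
  refine subst_ext (fun n => ?_) M
  cases n with
  | zero => simp [scons, lift, subst]
  | succ n => simp [scons, lift, subst_rename, subst]
              rw [subst_ext (σ2 := Tm.var) (fun m => rfl) _, subst_id]

end Tm

theorem Step.substc {M M' : Tm} (σ : ℕ → Tm) (h : Step M M') :
    Step (Tm.subst σ M) (Tm.subst σ M') := by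
  induction h with
  | beta => rw [Tm.subst_subst1]; exact Step.beta
  | app _ ih => exact Step.app ih

theorem MStep.substc {M M' : Tm} (σ : ℕ → Tm) (h : MStep M M') :
    MStep (Tm.subst σ M) (Tm.subst σ M') := by
  induction h with
  | refl => exact MStep.refl
  | trans1 s _ ih => exact MStep.trans1 (s.substc σ) ih

theorem MStep.appl {M M' N : Tm} (h : MStep M M') :
    MStep (Tm.app M N) (Tm.app M' N) := by
  induction h with
  | refl => exact MStep.refl
  | trans1 s _ ih => exact MStep.trans1 (Step.app s) ih

theorem MStep.trans' {M N O : Tm} (h1 : MStep M N) (h2 : MStep N O) : MStep M O := by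
  induction h1 with
  | refl => exact h2
  | trans1 s _ ih => exact MStep.trans1 s (ih h2)

/-- Logical equivalence is closed under backward weak head reduction. -/
theorem log_closed {Gamma : Ctx} {M1 M2 N1 N2 : Tm} {A : Ty}
    (h : Log A Gamma N1 N2) (r1 : MStep M1 N1) (r2 : MStep M2 N2) :
    Log A Gamma M1 M2 := by
  induction A generalizing Gamma M1 M2 N1 N2 with
  | base =>
    obtain ⟨s1, s2, hp⟩ := h
    exact AlgTm.base (r1.trans' s1) (r2.trans' s2) hp
  | arr A B ihA ihB =>
    intro Δ π hπ P1 P2 hP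
    exact ihB (h Δ π hπ P1 P2 hP) ((r1.substc π).appl) ((r2.substc π).appl)
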